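/- Completeness of the translation t for S4: with t defined by (□n A)^t = □(⋀_{i=0}^{n} q_i → A^t), if Γ^t ⊢_{S4(Q)} A^t in ordinary unimodal S4, then Γ ⊢_{S4_h} A. -/

import Mathlib

/-- Poly-modal formulas with modalities `□n` for `n : ℕ`. -/
inductive Fm : Type
  | atom : ℕ → Fm
  | bot  : Fm
  | and  : Fm → Fm → Fm
  | or   : Fm → Fm → Fm
  | imp  : Fm → Fm → Fm
  | neg  : Fm → Fm
  | box  : ℕ → Fm → Fm
  deriving DecidableEq

def Fm.top : Fm := Fm.neg Fm.bot

/-- `i` occurs as a modality index in the formula. -/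
def occursBox (i : ℕ) : Fm → Prop
  | .atom _ => False
  | .bot => False
  | .and A B => occursBox i A ∨ occursBox i B
  | .or A B => occursBox i A ∨ occursBox i B
  | .imp A B => occursBox i A ∨ occursBox i B
  | .neg A => occursBox i A
  | .box n A => i = n ∨ occursBox i A

/-- `n` is strictly greater than every modality index occurring in `A`
    (the paper's "`n > r(A)`"). -/
def BoxLt (A : Fm) (n : ℕ) : Prop := ∀ i, occursBox i A → i < n

/-- The language `L∞`: each box index strictly exceeds all box indices in its scope. -/
inductive Linf : Fm → Prop
  | atom (k : ℕ) : Linf (.atom k)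
  | bot : Linf .bot
  | and {A B : Fm} : Linf A → Linf B → Linf (.and A B)
  | or {A B : Fm} : Linf A → Linf B → Linf (.or A B)
  | imp {A B : Fm} : Linf A → Linf B → Linf (.imp A B)
  | neg {A : Fm} : Linf A → Linf (.neg A)
  | box {A : Fm} (n : ℕ) : Linf A → BoxLt A n → Linf (.box n A)

/-- Boolean evaluation treating atoms and boxed formulas as propositional atoms. -/
def evalWith (v : Fm → Bool) : Fm → Bool
  | .atom k => v (.atom k)
  | .bot => false
  | .and A B => evalWith v A && evalWith v B
  | .or A B => evalWith v A || evalWith v B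
  | .imp A B => !(evalWith v A) || evalWith v B
  | .neg A => !(evalWith v A)
  | .box n A => v (.box n A)

/-- Classical propositional tautologies (on `L∞`-formulas as atoms). -/
def Taut (A : Fm) : Prop := ∀ v, evalWith v A = true

def axH (F : Fm) : Prop := ∃ A n, Linf (Fm.box n A) ∧ F = (Fm.box n A).imp (Fm.box (n+1) A)
def axK (F : Fm) : Prop := ∃ A B n, Linf (Fm.box n (A.imp B)) ∧
    F = (Fm.box n (A.imp B)).imp ((Fm.box n A).imp (Fm.box n B))
def axFour (F : Fm) : Prop := ∃ A n, Linf (Fm.box n A) ∧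
    F = (Fm.box n A).imp (Fm.box (n+1) (Fm.box n A))
def axD (F : Fm) : Prop := ∃ n, F = Fm.neg (Fm.box n Fm.bot)
def axT (F : Fm) : Prop := ∃ A n, Linf (Fm.box n A) ∧ F = (Fm.box n A).imp A
def axL (F : Fm) : Prop := ∃ A n, Linf (Fm.box n A) ∧
    F = (Fm.box (n+1) ((Fm.box n A).imp A)).imp (Fm.box n A)
def axFive (F : Fm) : Prop := ∃ A n, Linf (Fm.box n A) ∧
    F = ((Fm.box n A).neg).imp (Fm.box (n+1) ((Fm.box n A).neg))

/-- Hilbert-style provability over `L∞` from a set of axiom (schema instances):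
    classical tautologies, modus ponens, and necessitation restricted to `n > r(A)`. -/
inductive Prv (Ax : Fm → Prop) : Fm → Prop
  | ax {A : Fm} : Ax A → Prv Ax A
  | taut {A : Fm} : Linf A → Taut A → Prv Ax A
  | mp {A B : Fm} : Prv Ax (A.imp B) → Prv Ax A → Prv Ax B
  | nec {A : Fm} (n : ℕ) : Prv Ax A → BoxLt A n → Prv Ax (Fm.box n A)

def K4hAx (F : Fm) : Prop := axH F ∨ axK F ∨ axFour F
def KD4hAx (F : Fm) : Prop := K4hAx F ∨ axD F
def S4hAx (F : Fm) : Prop := K4hAx F ∨ axT F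
def GLhAx (F : Fm) : Prop := K4hAx F ∨ axL F
def KD45hAx (F : Fm) : Prop := KD4hAx F ∨ axFive F

def K4h : Fm → Prop := Prv K4hAx
def KD4h : Fm → Prop := Prv KD4hAx
def S4h : Fm → Prop := Prv S4hAx
def GLh : Fm → Prop := Prv GLhAx

def conjList (l : List Fm) : Fm := l.foldr Fm.and Fm.top
def disjList (l : List Fm) : Fm := l.foldr Fm.or Fm.bot

/-- `Γ ⊢_L A` : some finite conjunction of members of `Γ` implies `A` in `L`. -/
def Deriv (Ax : Fm → Prop) (Γ : Set Fm) (A : Fm) : Prop :=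
  ∃ l : List Fm, (∀ B ∈ l, B ∈ Γ) ∧ Prv Ax ((conjList l).imp A)

/-- Ordinary unimodal formulas over the original atoms together with
    fresh atoms `q n`. -/
inductive MFm : Type
  | atom : ℕ → MFm
  | q : ℕ → MFm
  | bot : MFm
  | and : MFm → MFm → MFm
  | or : MFm → MFm → MFm
  | imp : MFm → MFm → MFm
  | neg : MFm → MFm
  | box : MFm → MFm
  deriving DecidableEq

def mevalWith (v : MFm → Bool) : MFm → Bool
  | .atom k => v (.atom k)
  | .q k => v (.q k)
  | .bot => false
  | .and A B => mevalWith v A && mevalWith v B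
  | .or A B => mevalWith v A || mevalWith v B
  | .imp A B => !(mevalWith v A) || mevalWith v B
  | .neg A => !(mevalWith v A)
  | .box A => v (.box A)

def MTaut (A : MFm) : Prop := ∀ v, mevalWith v A = true

/-- Ordinary unimodal `K4` over the language including the atoms `q`. -/
inductive K4Q : MFm → Prop
  | taut {A} : MTaut A → K4Q A
  | axK (A B : MFm) : K4Q ((MFm.box (A.imp B)).imp ((MFm.box A).imp (MFm.box B)))
  | axFour (A : MFm) : K4Q ((MFm.box A).imp (MFm.box (MFm.box A)))
  | mp {A B} : K4Q (A.imp B) → K4Q A → K4Q B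
  | nec {A} : K4Q A → K4Q (MFm.box A)

/-- Ordinary unimodal `S4` over the language including the atoms `q`. -/
inductive S4Q : MFm → Prop
  | taut {A} : MTaut A → S4Q A
  | axK (A B : MFm) : S4Q ((MFm.box (A.imp B)).imp ((MFm.box A).imp (MFm.box B)))
  | axFour (A : MFm) : S4Q ((MFm.box A).imp (MFm.box (MFm.box A)))
  | axT (A : MFm) : S4Q ((MFm.box A).imp A)
  | mp {A B} : S4Q (A.imp B) → S4Q A → S4Q B
  | nec {A} : S4Q A → S4Q (MFm.box A)

/-- `q_0 ∧ ⋯ ∧ q_n`. -/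
def qconj : ℕ → MFm
  | 0 => MFm.q 0
  | n+1 => (qconj n).and (MFm.q (n+1))

/-- The translation `t`: `(□n A)^t = □(q_0 ∧ ⋯ ∧ q_n → A^t)`. -/
def trT : Fm → MFm
  | .atom k => .atom k
  | .bot => .bot
  | .and A B => (trT A).and (trT B)
  | .or A B => (trT A).or (trT B)
  | .imp A B => (trT A).imp (trT B)
  | .neg A => (trT A).neg
  | .box n A => MFm.box ((qconj n).imp (trT A))

def conjM (l : List MFm) : MFm := l.foldr MFm.and (MFm.neg MFm.bot)

/-- `Γ ⊢_L A` for a unimodal system `L`. -/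
def DerivM (P : MFm → Prop) (Γ : Set MFm) (A : MFm) : Prop :=
  ∃ l : List MFm, (∀ B ∈ l, B ∈ Γ) ∧ P ((conjM l).imp A)

/-! Canonical model. If `Γ ⊬ A`, extend `Γ ∪ {¬A}` to a maximal `S4_h`-consistent set `X`.
Worlds are pairs `(Y, j)` of a maximal consistent set and a level `j`: `(Y, j)` sees `(Z, k)` iff
they are equal, or `k < j` and `□_k B ∈ Y` implies `B ∈ Z`; `q_m` holds at level `j` iff `m ≤ j`.
Axioms `H` and `4` make this relation transitive, so `S4(Q)` is sound for the model. Since the guard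
`q_0 ∧ ⋯ ∧ q_n` in `(□_n B)^t` restricts the box to worlds of level `≥ n`, a truth lemma shows that
`B^t` holds at `(Y, j)` iff `B ∈ Y`, as long as `j` exceeds the box indices of `B`. At `(X, i)` with
`i` large, `Γ^t` then holds and `A^t` fails. -/

lemma List.exists_map_eq_of_forall_mem_image {α β : Type*} {f : α → β} {s : Set α} :
    ∀ {l : List β}, (∀ b ∈ l, b ∈ f '' s) → ∃ l' : List α, (∀ a ∈ l', a ∈ s) ∧ l'.map f = l
  | [], _ => ⟨[], by simp, rfl⟩
  | b :: l, h => by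
    obtain ⟨a, ha, rfl⟩ := h b (by simp)
    obtain ⟨l', hl', rfl⟩ := exists_map_eq_of_forall_mem_image (l := l) fun b hb => h b (.tail _ hb)
    exact ⟨a :: l', by simpa [ha] using hl', rfl⟩

lemma Linf.top : Linf Fm.top := .neg .bot

lemma Linf.of_imp {A B : Fm} : Linf (A.imp B) → Linf A ∧ Linf B
  | .imp hA hB => ⟨hA, hB⟩

lemma Linf.of_box {n : ℕ} {A : Fm} : Linf (.box n A) → Linf A ∧ BoxLt A n
  | .box _ hA hAn => ⟨hA, hAn⟩

lemma BoxLt.mono {A : Fm} {n m : ℕ} (h : BoxLt A n) (hnm : n ≤ m) : BoxLt A m :=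
  fun i hi => (h i hi).trans_le hnm

lemma BoxLt.box_succ {A : Fm} {n : ℕ} (h : BoxLt A n) : BoxLt (.box n A) (n + 1) := by
  rintro i (rfl | hi)
  exacts [i.lt_succ_self, (h i hi).trans n.lt_succ_self]

def boxRank : Fm → ℕ
  | .atom _ | .bot => 0
  | .and A B | .or A B | .imp A B => max (boxRank A) (boxRank B)
  | .neg A => boxRank A
  | .box n A => max (n + 1) (boxRank A)

lemma boxLt_boxRank (A : Fm) : BoxLt A (boxRank A) := by
  induction A with
  | atom | bot => exact fun _ h => h.elim
  | and A B ihA ihB | or A B ihA ihB | imp A B ihA ihB =>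
    rintro i (h | h)
    exacts [(ihA i h).trans_le (le_max_left _ _), (ihB i h).trans_le (le_max_right _ _)]
  | neg A ih => exact ih
  | box n A ih =>
    rintro i (rfl | h)
    exacts [i.lt_succ_self.trans_le (le_max_left _ _), (ih i h).trans_le (le_max_right _ _)]

lemma exists_boxLt_forall_mem : ∀ l : List Fm, ∃ n, ∀ A ∈ l, BoxLt A n
  | [] => ⟨0, by simp⟩
  | A :: l => by
    obtain ⟨n, hn⟩ := exists_boxLt_forall_mem l
    refine ⟨max (boxRank A) n, ?_⟩
    simp only [List.mem_cons, forall_eq_or_imp]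
    exact ⟨(boxLt_boxRank A).mono (le_max_left _ _), fun B hB => (hn B hB).mono (le_max_right _ _)⟩

lemma linf_conjList {l : List Fm} (h : ∀ A ∈ l, Linf A) : Linf (conjList l) := by
  induction l with
  | nil => exact Linf.top
  | cons A l ih => exact .and (h A (by simp)) (ih fun B hB => h B (by simp [hB]))

section Eval

variable {v : Fm → Bool} {A B : Fm}

@[simp] lemma evalWith_bot : evalWith v .bot = true ↔ False := by simp [evalWith]

@[simp] lemma evalWith_neg : evalWith v A.neg = true ↔ ¬ evalWith v A = true := by
  simp [evalWith]

@[simp] lemma evalWith_and :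
    evalWith v (A.and B) = true ↔ evalWith v A = true ∧ evalWith v B = true := by
  simp [evalWith]

@[simp] lemma evalWith_or :
    evalWith v (A.or B) = true ↔ evalWith v A = true ∨ evalWith v B = true := by
  simp [evalWith]

@[simp] lemma evalWith_imp :
    evalWith v (A.imp B) = true ↔ (evalWith v A = true → evalWith v B = true) := by
  simp [evalWith, imp_iff_not_or]

end Eval

@[simp] lemma evalWith_conjList {v : Fm → Bool} {l : List Fm} :
    evalWith v (conjList l) = true ↔ ∀ A ∈ l, evalWith v A = true := by
  induction l with
  | nil => simp [conjList, Fm.top]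
  | cons A l ih => simp [conjList, ← ih]

section Propositional

variable {Ax : Fm → Prop}

lemma Prv.taut_mp {A B : Fm} (hA : Linf A) (hB : Linf B)
    (hAB : ∀ v, evalWith v A = true → evalWith v B = true) (h : Prv Ax A) : Prv Ax B :=
  .mp (.taut (.imp hA hB) fun v => evalWith_imp.2 (hAB v)) h

lemma Prv.taut_mp₂ {A B C : Fm} (hA : Linf A) (hB : Linf B) (hC : Linf C)
    (hABC : ∀ v, evalWith v A = true → evalWith v B = true → evalWith v C = true)
    (hA' : Prv Ax A) (hB' : Prv Ax B) : Prv Ax C :=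
  .mp (.mp (.taut (.imp hA (.imp hB hC)) fun v => by simpa using hABC v) hA') hB'

def Consistent (Ax : Fm → Prop) (X : Set Fm) : Prop :=
  ∀ l : List Fm, (∀ A ∈ l, A ∈ X) → ¬ Prv Ax ((conjList l).imp .bot)

variable {X : Set Fm} {A : Fm}

lemma Deriv.of_mem (hA : Linf A) (h : A ∈ X) : Deriv Ax X A :=
  ⟨[A], by simpa using h, .taut (.imp (linf_conjList (by simpa using hA)) hA) fun v => by simp⟩

lemma Deriv.not_consistent (hX : ∀ B ∈ X, Linf B) (hA : Linf A) (h : Deriv Ax X A)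
    (hn : Deriv Ax X A.neg) : ¬ Consistent Ax X := by
  obtain ⟨l₁, hl₁, h₁⟩ := h
  obtain ⟨l₂, hl₂, h₂⟩ := hn
  have hl : ∀ B ∈ l₁ ++ l₂, B ∈ X := by simpa [or_imp, forall_and] using And.intro hl₁ hl₂
  have hlinf : ∀ l : List Fm, (∀ B ∈ l, B ∈ X) → Linf (conjList l) :=
    fun l hl => linf_conjList fun B hB => hX B (hl B hB)
  refine fun hcon => hcon _ hl (Prv.taut_mp₂ (.imp (hlinf _ hl₁) hA)
    (.imp (hlinf _ hl₂) (.neg hA)) (.imp (hlinf _ hl) .bot) (fun v h₁ h₂ => ?_) h₁ h₂)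
  simp only [evalWith_imp, evalWith_neg, evalWith_bot, evalWith_conjList, List.mem_append]
    at h₁ h₂ ⊢
  grind

lemma Deriv.neg_of_not_consistent_insert (hX : ∀ B ∈ X, Linf B) (hA : Linf A)
    (h : ¬ Consistent Ax (insert A X)) : Deriv Ax X A.neg := by
  classical
  simp only [Consistent, not_forall, not_not] at h
  obtain ⟨l, hl, hprv⟩ := h
  have hlinf : ∀ B ∈ l, Linf B := fun B hB => (hl B hB).elim (· ▸ hA) (hX B)
  have hfilter : ∀ B ∈ l.filter (· ∈ X), B ∈ X := fun B hB => by
    simpa using (List.mem_filter.1 hB).2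
  refine ⟨_, hfilter, Prv.taut_mp (.imp (linf_conjList hlinf) .bot)
    (.imp (linf_conjList fun B hB => hX B (hfilter B hB)) (.neg hA)) (fun v hv => ?_) hprv⟩
  simp only [evalWith_imp, evalWith_neg, evalWith_bot, evalWith_conjList, List.mem_filter] at hv ⊢
  grind

lemma Consistent.insert_neg (hX : ∀ B ∈ X, Linf B) (hA : Linf A) (h : ¬ Deriv Ax X A) :
    Consistent Ax (insert A.neg X) := by
  by_contra hcon
  obtain ⟨l, hl, hprv⟩ := Deriv.neg_of_not_consistent_insert hX (.neg hA) hcon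
  have hlinf : Linf (conjList l) := linf_conjList fun B hB => hX B (hl B hB)
  exact h ⟨l, hl, Prv.taut_mp (.imp hlinf (.neg (.neg hA))) (.imp hlinf hA)
    (fun v => by simp only [evalWith_imp, evalWith_neg, not_not]; exact id) hprv⟩


variable {B : Fm}

structure MaximalConsistent (Ax : Fm → Prop) (X : Set Fm) : Prop where
  linf : ∀ A ∈ X, Linf A
  consistent : Consistent Ax X
  mem_or_neg_mem : ∀ A, Linf A → A ∈ X ∨ A.neg ∈ X

theorem exists_maximalConsistent_superset (hX : ∀ A ∈ X, Linf A) (hc : Consistent Ax X) :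
    ∃ M, MaximalConsistent Ax M ∧ X ⊆ M := by
  let S : Set (Set Fm) := {Y | (∀ A ∈ Y, Linf A) ∧ Consistent Ax Y}
  have hchain : ∀ c ⊆ S, IsChain (· ⊆ ·) c → c.Nonempty → ∃ ub ∈ S, ∀ Y ∈ c, Y ⊆ ub := by
    refine fun c hcS hc hne => ⟨⋃₀ c, ⟨?_, fun l hl => ?_⟩, fun _ => Set.subset_sUnion_of_mem⟩
    · rintro A ⟨Y, hY, hAY⟩
      exact (hcS hY).1 A hAY
    · obtain ⟨Y, hY, hlY⟩ :=
        hc.directedOn.exists_mem_subset_of_finite_of_subset_sUnion hne l.finite_toSet hl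
      exact (hcS hY).2 l hlY
  obtain ⟨M, hXM, ⟨hMlinf, hMcon⟩, hMmax⟩ := zorn_subset_nonempty S hchain X ⟨hX, hc⟩
  have hgrow : ∀ A, Linf A → A ∉ M → ¬ Consistent Ax (insert A M) := fun A hA hAM hcon =>
    hAM (Maximal.mem_of_prop_insert ⟨⟨hMlinf, hMcon⟩, hMmax⟩
      ⟨Set.forall_mem_insert.2 ⟨hA, hMlinf⟩, hcon⟩)
  refine ⟨M, ⟨hMlinf, hMcon, fun A hA => ?_⟩, hXM⟩
  by_contra! hA'
  exact (Deriv.neg_of_not_consistent_insert hMlinf hA (hgrow A hA hA'.1)).not_consistent hMlinf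
    (.neg hA) (Deriv.neg_of_not_consistent_insert hMlinf (.neg hA) (hgrow _ (.neg hA) hA'.2))
    hMcon

namespace MaximalConsistent

lemma mem_of_deriv (hX : MaximalConsistent Ax X) (hA : Linf A) (h : Deriv Ax X A) : A ∈ X :=
  (hX.mem_or_neg_mem A hA).resolve_right fun hn =>
    h.not_consistent hX.linf hA (.of_mem (.neg hA) hn) hX.consistent

lemma mem_of_taut (hX : MaximalConsistent Ax X) {l : List Fm} (hl : ∀ B ∈ l, B ∈ X) (hA : Linf A)
    (h : ∀ v, (∀ B ∈ l, evalWith v B = true) → evalWith v A = true) : A ∈ X :=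
  hX.mem_of_deriv hA ⟨l, hl, .taut (.imp (linf_conjList fun B hB => hX.linf B (hl B hB)) hA)
    fun v => by simpa using h v⟩

lemma mem_of_prv (hX : MaximalConsistent Ax X) (hA : Linf A) (h : Prv Ax A) : A ∈ X :=
  hX.mem_of_deriv hA ⟨[], by simp, h.taut_mp hA (.imp Linf.top hA) fun v hv => by simp [hv]⟩

lemma neg_mem_iff (hX : MaximalConsistent Ax X) (hA : Linf A) : A.neg ∈ X ↔ A ∉ X :=
  ⟨fun hn h => (Deriv.of_mem hA h).not_consistent hX.linf hA (.of_mem (.neg hA) hn) hX.consistent,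
    (hX.mem_or_neg_mem A hA).resolve_left⟩

lemma bot_not_mem (hX : MaximalConsistent Ax X) : Fm.bot ∉ X :=
  (hX.neg_mem_iff .bot).1 (hX.mem_of_prv Linf.top (.taut Linf.top fun _ => rfl))

lemma mp_mem (hX : MaximalConsistent Ax X) (hAB : A.imp B ∈ X) (hA : A ∈ X) : B ∈ X :=
  hX.mem_of_taut (l := [A.imp B, A]) (by simp [hAB, hA]) (hX.linf _ hAB).of_imp.2
    fun v => by simp only [List.mem_cons, forall_eq_or_imp, evalWith_imp]; tauto

lemma and_mem_iff (hX : MaximalConsistent Ax X) (hA : Linf A) (hB : Linf B) :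
    A.and B ∈ X ↔ A ∈ X ∧ B ∈ X := by
  refine ⟨fun h => ⟨hX.mem_of_taut (l := [A.and B]) (by simp [h]) hA (by simp +contextual),
    hX.mem_of_taut (l := [A.and B]) (by simp [h]) hB (by simp +contextual)⟩, fun h => ?_⟩
  exact hX.mem_of_taut (l := [A, B]) (by simp [h]) (.and hA hB) (by simp +contextual)

lemma or_mem_iff (hX : MaximalConsistent Ax X) (hA : Linf A) (hB : Linf B) :
    A.or B ∈ X ↔ A ∈ X ∨ B ∈ X := by
  refine ⟨fun h => ?_, ?_⟩
  · by_contra! hAB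
    exact hX.bot_not_mem <| hX.mem_of_taut (l := [A.or B, A.neg, B.neg])
      (by simp [h, hX.neg_mem_iff hA, hX.neg_mem_iff hB, hAB]) .bot (by simp; grind)
  · rintro (h | h)
    · exact hX.mem_of_taut (l := [A]) (by simp [h]) (.or hA hB) (by simp +contextual)
    · exact hX.mem_of_taut (l := [B]) (by simp [h]) (.or hA hB) (by simp +contextual)

lemma imp_mem_iff (hX : MaximalConsistent Ax X) (hA : Linf A) (hB : Linf B) :
    A.imp B ∈ X ↔ (A ∈ X → B ∈ X) := by
  refine ⟨hX.mp_mem, fun h => ?_⟩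
  by_cases hAX : A ∈ X
  · exact hX.mem_of_taut (l := [B]) (by simp [h hAX]) (.imp hA hB) (by simp +contextual)
  · exact hX.mem_of_taut (l := [A.neg]) (by simp [(hX.neg_mem_iff hA).2 hAX]) (.imp hA hB)
      (by simp +contextual)

end MaximalConsistent

end Propositional

section Modal

variable {Ax : Fm → Prop} {X Y Z : Set Fm} {A B : Fm} {n m j k : ℕ}

def BoxRel (n : ℕ) (X Y : Set Fm) : Prop := ∀ A, Fm.box n A ∈ X → A ∈ Y

namespace MaximalConsistent

lemma mem_of_axiom_imp (hX : MaximalConsistent Ax X) (hAx : Ax (A.imp B))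
    (hAB : Linf (A.imp B)) (hA : A ∈ X) : B ∈ X :=
  hX.mp_mem (hX.mem_of_prv hAB (.ax hAx)) hA

lemma box_mp_mem (hX : MaximalConsistent Ax X) (hK : axK ≤ Ax) (hAB : .box n (A.imp B) ∈ X)
    (hA : .box n A ∈ X) : .box n B ∈ X := by
  have hABn := hX.linf _ hAB
  obtain ⟨hAB', hABlt⟩ := hABn.of_box
  have hBn : Linf (.box n B) := .box n hAB'.of_imp.2 fun i hi => hABlt i (.inr hi)
  refine hX.mp_mem (hX.mem_of_axiom_imp (hK _ ⟨A, B, n, hABn, rfl⟩) ?_ hAB) hA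
  exact .imp hABn (.imp (hX.linf _ hA) hBn)

lemma box_succ_mem (hX : MaximalConsistent Ax X) (hH : axH ≤ Ax) (h : .box n A ∈ X) :
    .box (n + 1) A ∈ X :=
  have hAn := hX.linf _ h
  hX.mem_of_axiom_imp (hH _ ⟨A, n, hAn, rfl⟩)
    (.imp hAn (.box _ hAn.of_box.1 (hAn.of_box.2.mono n.le_succ))) h

lemma box_mem_of_le (hX : MaximalConsistent Ax X) (hH : axH ≤ Ax) (h : .box n A ∈ X)
    (hnm : n ≤ m) : .box m A ∈ X := by
  induction m, hnm using Nat.le_induction with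
  | base => exact h
  | succ m _ ih => exact hX.box_succ_mem hH ih

lemma box_box_mem (hX : MaximalConsistent Ax X) (h4 : axFour ≤ Ax) (h : .box n A ∈ X) :
    .box (n + 1) (.box n A) ∈ X :=
  have hAn := hX.linf _ h
  hX.mem_of_axiom_imp (h4 _ ⟨A, n, hAn, rfl⟩) (.imp hAn (.box _ hAn hAn.of_box.2.box_succ)) h

lemma box_box_mem_of_lt (hX : MaximalConsistent Ax X) (hH : axH ≤ Ax) (h4 : axFour ≤ Ax)
    (h : .box k A ∈ X) (hkj : k < j) : .box j (.box k A) ∈ X :=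
  hX.box_mem_of_le hH (hX.box_box_mem h4 h) hkj

lemma mem_of_box_mem (hX : MaximalConsistent Ax X) (hT : axT ≤ Ax) (h : .box n A ∈ X) : A ∈ X :=
  have hAn := hX.linf _ h
  hX.mem_of_axiom_imp (hT _ ⟨A, n, hAn, rfl⟩) (.imp hAn hAn.of_box.1) h

lemma box_mem_of_prv (hX : MaximalConsistent Ax X) (hK : axK ≤ Ax) :
    ∀ {l : List Fm} {A : Fm}, (∀ B ∈ l, .box n B ∈ X) → Linf A → BoxLt A n →
      Prv Ax ((conjList l).imp A) → .box n A ∈ X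
  | [], A, _, hA, hAn, h =>
    hX.mem_of_prv (.box n hA hAn)
      (.nec n (h.taut_mp (.imp Linf.top hA) hA fun v hv => by simpa [conjList, Fm.top] using hv)
        hAn)
  | B :: l, A, hl, hA, hAn, h => by
    obtain ⟨hB, hBn⟩ := (hX.linf _ (hl B (by simp))).of_box
    have hl' : ∀ C ∈ l, .box n C ∈ X := fun C hC => hl C (by simp [hC])
    have hlinf : Linf (conjList l) := linf_conjList fun C hC => (hX.linf _ (hl' C hC)).of_box.1
    refine hX.box_mp_mem hK (hX.box_mem_of_prv hK hl' (.imp hB hA)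
      (fun i hi => hi.elim (hBn i) (hAn i)) (h.taut_mp ?_ ?_ ?_)) (hl B (by simp))
    · exact .imp (.and hB hlinf) hA
    · exact .imp hlinf (.imp hB hA)
    · intro v hv
      simp only [conjList, List.foldr_cons, evalWith_imp, evalWith_and] at hv ⊢
      exact fun hl hB => hv ⟨hB, hl⟩

lemma exists_boxRel_not_mem (hX : MaximalConsistent Ax X) (hK : axK ≤ Ax) (hA : Linf A)
    (hAn : BoxLt A n) (h : .box n A ∉ X) :
    ∃ Y, MaximalConsistent Ax Y ∧ BoxRel n X Y ∧ A ∉ Y := by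
  have hlinf : ∀ B ∈ {B | .box n B ∈ X}, Linf B := fun B hB => (hX.linf _ hB).of_box.1
  have hcon : Consistent Ax (insert A.neg {B | .box n B ∈ X}) :=
    .insert_neg hlinf hA fun ⟨l, hl, hprv⟩ => h (hX.box_mem_of_prv hK hl hA hAn hprv)
  obtain ⟨Y, hY, hsub⟩ :=
    exists_maximalConsistent_superset (Set.forall_mem_insert.2 ⟨.neg hA, hlinf⟩) hcon
  exact ⟨Y, hY, fun B hB => hsub (.inr hB), (hY.neg_mem_iff hA).1 (hsub (.inl rfl))⟩

end MaximalConsistent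

lemma BoxRel.trans (hX : MaximalConsistent Ax X) (hH : axH ≤ Ax) (h4 : axFour ≤ Ax) (hkj : k < j)
    (hXY : BoxRel j X Y) (hYZ : BoxRel k Y Z) : BoxRel k X Z :=
  fun A hA => hYZ A (hXY _ (hX.box_box_mem_of_lt hH h4 hA hkj))

lemma BoxRel.mem_of_box_mem (hX : MaximalConsistent Ax X) (hY : MaximalConsistent Ax Y)
    (hH : axH ≤ Ax) (h4 : axFour ≤ Ax) (hT : axT ≤ Ax) (hXY : BoxRel j X Y) (hnj : n ≤ j)
    (h : .box n A ∈ X) : A ∈ Y := by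
  rcases hnj.eq_or_lt with rfl | hnj
  · exact hXY A h
  · exact hY.mem_of_box_mem hT (hXY _ (hX.box_box_mem_of_lt hH h4 h hnj))

end Modal

section Kripke

variable {W : Type*} (R : W → W → Prop) (va vq : ℕ → W → Prop)

def MFm.Sat : MFm → W → Prop
  | .atom k, w => va k w
  | .q m, w => vq m w
  | .bot, _ => False
  | .and A B, w => A.Sat w ∧ B.Sat w
  | .or A B, w => A.Sat w ∨ B.Sat w
  | .imp A B, w => A.Sat w → B.Sat w
  | .neg A, w => ¬ A.Sat w
  | .box A, w => ∀ u, R w u → A.Sat u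

lemma mevalWith_eq_true_iff_sat {w : W} {v : MFm → Bool} (hv : ∀ B, v B = true ↔ B.Sat R va vq w)
    (A : MFm) : mevalWith v A = true ↔ A.Sat R va vq w := by
  induction A <;> simp_all [mevalWith, MFm.Sat, imp_iff_not_or, ← Bool.not_eq_true]

theorem S4Q.sound [Std.Refl R] [IsTrans W R] {A : MFm} (h : S4Q A) (w : W) :
    A.Sat R va vq w := by
  classical
  induction h generalizing w with
  | taut h => exact (mevalWith_eq_true_iff_sat R va vq (fun _ => decide_eq_true_iff) _).1 (h _)
  | axK A B => exact fun hAB hA u hu => hAB u hu (hA u hu)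
  | axFour A => exact fun hA u hu u' hu' => hA u' (trans_of R hu hu')
  | axT A => exact fun hA => hA w (refl_of R w)
  | mp _ _ ihAB ihA => exact ihAB w (ihA w)
  | nec _ ih => exact fun u _ => ih u

lemma sat_conjM_iff {l : List MFm} {w : W} :
    (conjM l).Sat R va vq w ↔ ∀ A ∈ l, A.Sat R va vq w := by
  induction l with
  | nil => simp [conjM, MFm.Sat]
  | cons A l ih => simp [conjM, MFm.Sat, ← ih]

lemma sat_qconj_iff {n : ℕ} {w : W} : (qconj n).Sat R va vq w ↔ ∀ m ≤ n, vq m w := by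
  induction n with
  | zero => simp [qconj, MFm.Sat]
  | succ n ih => simp [qconj, MFm.Sat, ih, Nat.le_succ_iff, or_imp, forall_and]

end Kripke

lemma axH_le_S4hAx : axH ≤ S4hAx := fun _ h => .inl (.inl h)
lemma axK_le_S4hAx : axK ≤ S4hAx := fun _ h => .inl (.inr (.inl h))
lemma axFour_le_S4hAx : axFour ≤ S4hAx := fun _ h => .inl (.inr (.inr h))
lemma axT_le_S4hAx : axT ≤ S4hAx := fun _ h => .inr h

abbrev CanonicalWorld : Type := {X : Set Fm // MaximalConsistent S4hAx X} × ℕ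

/-- Non-trivial steps strictly lower the level: composing two steps of the same level `k` would
need `□_k B → □_k □_k B`, and `□_k □_k B` is not in `L∞`. -/
def CanonicalRel (p q : CanonicalWorld) : Prop :=
  p = q ∨ q.2 < p.2 ∧ BoxRel q.2 p.1.1 q.1.1

instance : Std.Refl CanonicalRel := ⟨fun _ => .inl rfl⟩

instance : IsTrans CanonicalWorld CanonicalRel where
  trans := by
    rintro p q r (rfl | ⟨hqp, hpq⟩) (rfl | ⟨hrq, hqr⟩)
    · exact .inl rfl
    · exact .inr ⟨hrq, hqr⟩
    · exact .inr ⟨hqp, hpq⟩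
    · exact .inr ⟨hrq.trans hqp,
        hpq.trans p.1.2 axH_le_S4hAx axFour_le_S4hAx hrq hqr⟩

def CanonicalSat : MFm → CanonicalWorld → Prop :=
  MFm.Sat CanonicalRel (fun k p => .atom k ∈ p.1.1) (fun m p => m ≤ p.2)

lemma canonicalSat_qconj_iff {n : ℕ} {p : CanonicalWorld} : CanonicalSat (qconj n) p ↔ n ≤ p.2 :=
  (sat_qconj_iff ..).trans ⟨fun h => h n le_rfl, fun h _ hm => hm.trans h⟩

theorem canonicalSat_trT_iff {A : Fm} (hA : Linf A) (X : {X : Set Fm // MaximalConsistent S4hAx X})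
    {i : ℕ} (hi : BoxLt A i) : CanonicalSat (trT A) (X, i) ↔ A ∈ X.1 := by
  induction hA generalizing X i with
  | atom k => rfl
  | bot => exact iff_of_false id X.2.bot_not_mem
  | and hA hB ihA ihB =>
    exact (and_congr (ihA X fun m hm => hi m (.inl hm)) (ihB X fun m hm => hi m (.inr hm))).trans
      (X.2.and_mem_iff hA hB).symm
  | or hA hB ihA ihB =>
    exact (or_congr (ihA X fun m hm => hi m (.inl hm)) (ihB X fun m hm => hi m (.inr hm))).trans
      (X.2.or_mem_iff hA hB).symm
  | imp hA hB ihA ihB =>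
    exact (imp_congr (ihA X fun m hm => hi m (.inl hm)) (ihB X fun m hm => hi m (.inr hm))).trans
      (X.2.imp_mem_iff hA hB).symm
  | neg hA ih => exact (not_congr (ih X hi)).trans (X.2.neg_mem_iff hA).symm
  | box n hA hAn ih =>
    have hni : n < i := hi n (.inl rfl)
    constructor
    · intro h
      by_contra hnot
      obtain ⟨Y, hY, hXY, hAY⟩ := X.2.exists_boxRel_not_mem axK_le_S4hAx hA hAn hnot
      exact hAY <| (ih ⟨Y, hY⟩ hAn).1 <|
        h (⟨Y, hY⟩, n) (.inr ⟨hni, hXY⟩) (canonicalSat_qconj_iff.2 le_rfl)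
    · rintro h ⟨Y, j⟩ hXY hnj
      replace hnj : n ≤ j := canonicalSat_qconj_iff.1 hnj
      refine (ih Y (hAn.mono hnj)).2 ?_
      rcases hXY with hXY | ⟨-, hXY⟩
      · cases hXY
        exact X.2.mem_of_box_mem axT_le_S4hAx h
      · exact hXY.mem_of_box_mem X.2 Y.2 axH_le_S4hAx axFour_le_S4hAx axT_le_S4hAx hnj h

/-- completeness of the translation `t` for `S4`:
    if `Γ^t ⊢_{S4(Q)} A^t` then `Γ ⊢_{S4_h} A`. -/
theorem trT_complete_S4 (Γ : Set Fm) (A : Fm)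
    (hΓ : ∀ B ∈ Γ, Linf B) (hA : Linf A)
    (h : DerivM S4Q (trT '' Γ) (trT A)) :
    Deriv S4hAx Γ A := by
  obtain ⟨_, hl, hprv⟩ := h
  obtain ⟨l, hlΓ, rfl⟩ := List.exists_map_eq_of_forall_mem_image hl
  by_contra hnd
  obtain ⟨X, hX, hΓX⟩ := exists_maximalConsistent_superset (Set.forall_mem_insert.2 ⟨.neg hA, hΓ⟩)
    (Consistent.insert_neg hΓ hA hnd)
  obtain ⟨i, hi⟩ := exists_boxLt_forall_mem (A :: l)
  have hl : CanonicalSat (conjM (l.map trT)) (⟨X, hX⟩, i) := by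
    refine (sat_conjM_iff ..).2 fun _ hC => ?_
    obtain ⟨B, hB, rfl⟩ := List.mem_map.1 hC
    exact (canonicalSat_trT_iff (hΓ B (hlΓ B hB)) _ (hi B (.tail _ hB))).2 (hΓX (.inr (hlΓ B hB)))
  have hAX : A ∈ X :=
    (canonicalSat_trT_iff hA _ (hi A (by simp))).1 (S4Q.sound _ _ _ hprv _ hl)
  exact (hX.neg_mem_iff hA).1 (hΓX (.inl rfl)) hAX
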